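/- Let σ : Sym⁺⁺(3) → Sym(3) be isotropic and Fréchet differentiable. Let V : ℝ → Sym⁺⁺(3) and R : ℝ → O(3) be differentiable at t₀, set F(t) = V(t) R(t), B(t) = V(t)², L = F'(t₀) F(t₀)⁻¹, D = sym L, Ω = R'(t₀) R(t₀)ᵀ, and B₀ = B(t₀). Then the Green–Naghdi rate of σ(B(t)) at t₀ satisfies (d/dt)[σ(B(t))]|_{t₀} + σ(B₀) Ω − Ω σ(B₀) = 2 · Dσ(B₀).(V(t₀) D V(t₀)). -/

import Mathlib

/-!
Differentiating `B = V²` gives `Ḃ = V̇V + VV̇`. Since `R Rᵀ = 1`, the spin `Ω = Ṙ Rᵀ` is skew and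
`L = V̇V⁻¹ + VΩV⁻¹`, so that `Ḃ = 2 V D V + Ω B − B Ω`. Differentiating the isotropy relation
`σ(Q B Qᵀ) = Q σ(B) Qᵀ` along the rotations `Q(s) = exp(sΩ)` at `s = 0` gives
`Dσ(B).(Ω B − B Ω) = Ω σ(B) − σ(B) Ω`, and the chain rule concludes.
-/

open Matrix

noncomputable section

abbrev M3 := Matrix (Fin 3) (Fin 3) ℝ

attribute [local instance] Matrix.frobeniusNormedAddCommGroup Matrix.frobeniusNormedSpace

attribute [local instance] Matrix.frobeniusNormedRing Matrix.frobeniusNormedAlgebra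

open NormedSpace

section

variable {m n : Type*} [Fintype m] [Fintype n]

theorem HasDerivAt.matrix_transpose {f : ℝ → Matrix m n ℝ} {f' : Matrix m n ℝ} {x : ℝ}
    (h : HasDerivAt f f' x) : HasDerivAt (fun t => (f t)ᵀ) f'ᵀ x :=
  (transposeLinearEquiv m n ℝ ℝ).toLinearMap.toContinuousLinearMap.hasFDerivAt.comp_hasDerivAt x h

theorem isSymm_of_hasDerivAt_of_forall_isSymm {V : ℝ → Matrix n n ℝ} {V' : Matrix n n ℝ} {x : ℝ}
    (hV : HasDerivAt V V' x) (hsymm : ∀ t, (V t).IsSymm) : V'.IsSymm :=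
  (funext hsymm ▸ hV.matrix_transpose :).unique hV

variable [DecidableEq n]

theorem transpose_eq_neg_of_hasDerivAt_of_forall_mul_transpose_eq_one {R : ℝ → Matrix n n ℝ}
    {R' : Matrix n n ℝ} {x : ℝ} (hR : HasDerivAt R R' x) (horth : ∀ t, R t * (R t)ᵀ = 1) :
    (R' * (R x)ᵀ)ᵀ = -(R' * (R x)ᵀ) := by
  have hRRt : HasDerivAt (fun t => R t * (R t)ᵀ) (R' * (R x)ᵀ + R x * R'ᵀ) x :=
    hR.mul hR.matrix_transpose
  rw [funext horth] at hRRt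
  have hzero : R' * (R x)ᵀ + R x * R'ᵀ = 0 := hRRt.unique (hasDerivAt_const x 1)
  rw [transpose_mul, transpose_transpose]
  exact eq_neg_of_add_eq_zero_right hzero

theorem Matrix.PosDef.mul_mul_transpose_of_transpose_mul_eq_one {Q X : Matrix n n ℝ}
    (hQ : Qᵀ * Q = 1) (hX : X.PosDef) : (Q * X * Qᵀ).PosDef :=
  ((isUnit_iff_isUnit_det Q).2 (isUnit_det_of_left_inverse hQ)).posDef_star_right_conjugate_iff.2
    hX

theorem Matrix.PosDef.mul_self {V : Matrix n n ℝ} (hV : V.PosDef) : (V * V).PosDef := by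
  have hsymm : Vᵀ = V := (isHermitian_iff_isSymm.1 hV.isHermitian).eq
  simpa [star_eq_conjTranspose, conjTranspose_eq_transpose_of_trivial, hsymm] using
    hV.isUnit.posDef_star_right_conjugate_iff.2 PosDef.one

theorem transpose_exp_smul_mul_exp_smul {Ω : Matrix n n ℝ} (hΩ : Ωᵀ = -Ω) (s : ℝ) :
    (exp (s • Ω))ᵀ * exp (s • Ω) = 1 := by
  rw [← exp_transpose, transpose_smul, hΩ, smul_neg,
    ← Matrix.exp_add_of_commute (-(s • Ω)) (s • Ω) (Commute.neg_left rfl), neg_add_cancel,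
    exp_zero]

theorem hasDerivAt_exp_smul_mul_mul_transpose {Ω : Matrix n n ℝ} (hΩ : Ωᵀ = -Ω)
    (X : Matrix n n ℝ) :
    HasDerivAt (fun s : ℝ => exp (s • Ω) * X * (exp (s • Ω))ᵀ) (Ω * X - X * Ω) 0 := by
  have hQ : HasDerivAt (fun s : ℝ => exp (s • Ω)) Ω 0 := by
    have h := hasDerivAt_exp_smul_const (𝕂 := ℝ) Ω 0
    rw [zero_smul, exp_zero, one_mul] at h
    exact h
  refine ((hQ.mul_const X).mul hQ.matrix_transpose).congr_deriv ?_
  simp [hΩ, sub_eq_add_neg]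

def IsIsotropic (σ : Matrix n n ℝ → Matrix n n ℝ) : Prop :=
  ∀ Q X : Matrix n n ℝ, Qᵀ * Q = 1 → X.PosDef → σ (Q * X * Qᵀ) = Q * σ X * Qᵀ

theorem IsIsotropic.fderivWithin_apply_commutator {σ : Matrix n n ℝ → Matrix n n ℝ}
    (hσ : IsIsotropic σ) {B Ω : Matrix n n ℝ} {T : Matrix n n ℝ →L[ℝ] Matrix n n ℝ}
    (hB : B.PosDef) (hT : HasFDerivWithinAt σ T {X | X.PosDef} B) (hΩ : Ωᵀ = -Ω) :
    T (Ω * B - B * Ω) = Ω * σ B - σ B * Ω := by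
  set Q : ℝ → Matrix n n ℝ := fun s => exp (s • Ω)
  have hQ (s : ℝ) : (Q s)ᵀ * Q s = 1 := transpose_exp_smul_mul_exp_smul hΩ s
  have hσQ : HasDerivAt (fun s => σ (Q s * B * (Q s)ᵀ)) (T (Ω * B - B * Ω)) 0 :=
    hT.comp_hasDerivAt_of_eq 0 (hasDerivAt_exp_smul_mul_mul_transpose hΩ B)
      (.of_forall fun s => hB.mul_mul_transpose_of_transpose_mul_eq_one (hQ s)) (by simp [Q])
  rw [funext fun s => hσ (Q s) B (hQ s) hB] at hσQ
  exact hσQ.unique (hasDerivAt_exp_smul_mul_mul_transpose hΩ (σ B))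

theorem add_mul_mul_inv_eq_of_mul_transpose_eq_one {V R V' R' : Matrix n n ℝ}
    (hR : R * Rᵀ = 1) :
    (V' * R + V * R') * (V * R)⁻¹ = V' * V⁻¹ + V * (R' * Rᵀ) * V⁻¹ := by
  rw [Matrix.mul_inv_rev, inv_eq_right_inv hR, add_mul]
  simp only [← Matrix.mul_assoc, add_left_inj]
  simp only [Matrix.mul_assoc, hR, Matrix.mul_one]

theorem mul_add_mul_eq_mul_add_transpose_mul {V V' Ω L : Matrix n n ℝ} (hVsymm : Vᵀ = V)
    (hV : IsUnit V) (hV' : V'ᵀ = V') (hΩ : Ωᵀ = -Ω) (hL : L = V' * V⁻¹ + V * Ω * V⁻¹) :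
    V' * V + V * V' = V * (L + Lᵀ) * V + (Ω * (V * V) - V * V * Ω) := by
  have hinv : V⁻¹ * V = 1 := nonsing_inv_mul V ((isUnit_iff_isUnit_det V).1 hV)
  have hinv' : V * V⁻¹ = 1 := mul_nonsing_inv V ((isUnit_iff_isUnit_det V).1 hV)
  subst hL
  simp only [transpose_add, transpose_mul, transpose_nonsing_inv, hVsymm, hV', hΩ]
  simp only [mul_add, add_mul, ← Matrix.mul_assoc, hinv', one_mul, neg_mul, mul_neg]
  simp only [Matrix.mul_assoc, hinv, mul_one]
  abel

end

theorem green_naghdi_formula_general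
    (σ : M3 → M3)
    (hiso : ∀ (Q X : M3), Qᵀ * Q = 1 → X.PosDef → σ (Q * X * Qᵀ) = Q * σ X * Qᵀ)
    (V : ℝ → M3) (hVpos : ∀ t, (V t).PosDef)
    (R : ℝ → M3) (hRorth : ∀ t, (R t)ᵀ * R t = 1)
    (t₀ : ℝ) (V' R' F' : M3)
    (hV : HasDerivAt V V' t₀) (hR : HasDerivAt R R' t₀)
    (hF : HasDerivAt (fun t => V t * R t) F' t₀)
    (T : M3 →L[ℝ] M3)
    (hT : HasFDerivWithinAt σ T {X : M3 | X.PosDef} (V t₀ * V t₀))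
    (L D Ω B₀ : M3)
    (hL : L = F' * (V t₀ * R t₀)⁻¹)
    (hD : D = (1 / 2 : ℝ) • (L + Lᵀ))
    (hΩ : Ω = R' * (R t₀)ᵀ)
    (hB₀ : B₀ = V t₀ * V t₀) :
    HasDerivAt (fun t => σ (V t * V t))
      ((2 : ℝ) • T (V t₀ * D * V t₀) - σ B₀ * Ω + Ω * σ B₀) t₀ := by
  have hVsymm (t : ℝ) : (V t).IsSymm := isHermitian_iff_isSymm.1 (hVpos t).isHermitian
  have hV' : V'.IsSymm := isSymm_of_hasDerivAt_of_forall_isSymm hV hVsymm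
  have hΩskew : Ωᵀ = -Ω := hΩ ▸ transpose_eq_neg_of_hasDerivAt_of_forall_mul_transpose_eq_one hR
    fun t => mul_eq_one_comm.1 (hRorth t)
  have hLV : L = V' * (V t₀)⁻¹ + V t₀ * Ω * (V t₀)⁻¹ := by
    rw [hL, hF.unique (hV.mul hR), hΩ,
      add_mul_mul_inv_eq_of_mul_transpose_eq_one (mul_eq_one_comm.1 (hRorth t₀))]
  have hBrate : V' * V t₀ + V t₀ * V' = (2 : ℝ) • (V t₀ * D * V t₀) + (Ω * B₀ - B₀ * Ω) := by
    rw [mul_add_mul_eq_mul_add_transpose_mul (hVsymm t₀) (hVpos t₀).isUnit hV' hΩskew hLV, hD,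
      Matrix.mul_smul, Matrix.smul_mul, smul_smul, hB₀]
    norm_num
  have hchain : HasDerivAt (fun t => σ (V t * V t)) (T (V' * V t₀ + V t₀ * V')) t₀ :=
    hT.comp_hasDerivAt t₀ (hV.mul hV) (.of_forall fun t => (hVpos t).mul_self)
  rw [hBrate, map_add, map_smul, IsIsotropic.fderivWithin_apply_commutator hiso
    (hB₀ ▸ (hVpos t₀).mul_self) (hB₀ ▸ hT) hΩskew] at hchain
  convert hchain using 1
  abel

/-- Formula for the Green–Naghdi rate: for an isotropic, Fréchet
differentiable `σ : Sym⁺⁺(3) → Sym(3)` and a differentiable polar decomposition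
`F = V R` (`V` positive definite symmetric, `R` orthogonal), with `B = V²`,
`L = F' F⁻¹`, `D = sym L`, `Ω = R' Rᵀ`, one has
`(d/dt)[σ(B(t))] + σ(B₀) Ω − Ω σ(B₀) = 2 Dσ(B₀).(V D V)`. -/
theorem green_naghdi_formula
    (σ : M3 → M3)
    (hmaps : ∀ X : M3, X.PosDef → (σ X).IsSymm)
    (hiso : ∀ (Q X : M3), Qᵀ * Q = 1 → X.PosDef → σ (Q * X * Qᵀ) = Q * σ X * Qᵀ)
    (V : ℝ → M3) (hVpos : ∀ t, (V t).PosDef)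
    (R : ℝ → M3) (hRorth : ∀ t, (R t)ᵀ * R t = 1)
    (t₀ : ℝ) (V' R' F' : M3)
    (hV : HasDerivAt V V' t₀) (hR : HasDerivAt R R' t₀)
    (hF : HasDerivAt (fun t => V t * R t) F' t₀)
    (T : M3 →L[ℝ] M3)
    (hT : HasFDerivWithinAt σ T {X : M3 | X.PosDef} (V t₀ * V t₀))
    (L D Ω B₀ : M3)
    (hL : L = F' * (V t₀ * R t₀)⁻¹)
    (hD : D = (1 / 2 : ℝ) • (L + Lᵀ))
    (hΩ : Ω = R' * (R t₀)ᵀ)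
    (hB₀ : B₀ = V t₀ * V t₀) :
    HasDerivAt (fun t => σ (V t * V t))
      ((2 : ℝ) • T (V t₀ * D * V t₀) - σ B₀ * Ω + Ω * σ B₀) t₀ :=
  green_naghdi_formula_general σ hiso V hVpos R hRorth t₀ V' R' F' hV hR hF T hT L D Ω B₀ hL hD hΩ
    hB₀
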